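/- Let C be a d-uniform clutter with a perfect matching such that its set covering polyhedron Q(A) is integral. Then C is vertex critical, i.e., α₀(C \ {x_i}) < α₀(C) for every vertex x_i. -/

import Mathlib

open Finset

/-- A clutter on vertex set `Fin n`: a family of nonempty edges, none contained in another. -/
structure Clutter (n : ℕ) where
  edges : Finset (Finset (Fin n))
  nonempty_edges : ∀ e ∈ edges, e.Nonempty
  antichain : ∀ e ∈ edges, ∀ f ∈ edges, e ⊆ f → e = f

namespace Clutter

variable {n : ℕ}

/-- `C` is `d`-uniform: every edge has exactly `d` vertices. -/
def Uniform (C : Clutter n) (d : ℕ) : Prop := ∀ e ∈ C.edges, e.card = d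

/-- `S` is a vertex cover of `C`. -/
def IsCover (C : Clutter n) (S : Finset (Fin n)) : Prop := ∀ e ∈ C.edges, (e ∩ S).Nonempty

/-- `S` is a minimal vertex cover of `C`. -/
def IsMinCover (C : Clutter n) (S : Finset (Fin n)) : Prop :=
  C.IsCover S ∧ ∀ T ⊆ S, C.IsCover T → T = S

/-- The vertex covering number `α₀(C)`. -/
noncomputable def coverNumber (C : Clutter n) : ℕ :=
  sInf {k | ∃ S : Finset (Fin n), C.IsCover S ∧ S.card = k}

/-- The edge independence (matching) number `β₁(C)`. -/
noncomputable def matchNumber (C : Clutter n) : ℕ :=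
  sSup {k | ∃ M : Finset (Finset (Fin n)), M ⊆ C.edges ∧
    (∀ e ∈ M, ∀ f ∈ M, e ≠ f → Disjoint e f) ∧ M.card = k}

/-- `C` has a perfect matching: pairwise disjoint edges covering all vertices. -/
def HasPerfectMatching (C : Clutter n) : Prop :=
  ∃ M : Finset (Finset (Fin n)), M ⊆ C.edges ∧
    (∀ e ∈ M, ∀ f ∈ M, e ≠ f → Disjoint e f) ∧ (∀ i : Fin n, ∃ e ∈ M, i ∈ e)

/-- The set covering polyhedron `Q(A) = {x : x ≥ 0, xA ≥ 1}`. -/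
def QA (C : Clutter n) : Set (Fin n → ℝ) :=
  {x | (∀ i, 0 ≤ x i) ∧ ∀ e ∈ C.edges, 1 ≤ ∑ i ∈ e, x i}

/-- `Q(A)` is an integral polyhedron: all its vertices (extreme points) are integral. -/
def QAIntegral (C : Clutter n) : Prop :=
  ∀ x ∈ Set.extremePoints ℝ C.QA, ∀ i, ∃ z : ℤ, x i = (z : ℝ)

/-- Deletion of a vertex: remove `v` and all edges through it. -/
def delete (C : Clutter n) (v : Fin n) : Clutter n where
  edges := C.edges.filter (fun e => v ∉ e)
  nonempty_edges := fun e he => C.nonempty_edges e (mem_filter.mp he).1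
  antichain := fun e he f hf hef =>
    C.antichain e (mem_filter.mp he).1 f (mem_filter.mp hf).1 hef

/-- The edges of the minor of `C` obtained by deleting the vertices in `D`
(setting them to `0`) and contracting the vertices in `U` (setting them to `1`):
the minimal nonempty sets of the form `e \ U` with `e` an edge disjoint from `D`. -/
def minorEdges (C : Clutter n) (D U : Finset (Fin n)) : Finset (Finset (Fin n)) :=
  ((C.edges.filter (fun e => Disjoint e D)).image (fun e => e \ U)).filter
    (fun e => e.Nonempty ∧
      ∀ f ∈ (C.edges.filter (fun e => Disjoint e D)).image (fun e => e \ U),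
        f.Nonempty → f ⊆ e → f = e)

/-- The minor of `C` determined by deleting `D` and contracting `U`. -/
def minor (C : Clutter n) (D U : Finset (Fin n)) : Clutter n where
  edges := C.minorEdges D U
  nonempty_edges := fun e he => ((mem_filter.mp he).2).1
  antichain := fun e he f hf hef =>
    ((mem_filter.mp hf).2).2 e (mem_filter.mp he).1 ((mem_filter.mp he).2).1 hef

/-- The König property: `α₀(C) = β₁(C)`. -/
def HasKonig (C : Clutter n) : Prop := C.coverNumber = C.matchNumber

/-- The packing property: every (proper) minor of `C` has the König property. -/
def PackingProperty (C : Clutter n) : Prop :=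
  ∀ D U : Finset (Fin n), Disjoint D U →
    (∀ e ∈ C.edges, Disjoint e D → ¬ e ⊆ U) → (C.minor D U).HasKonig

/-- The max-flow min-cut property: for every nonnegative integral `α` the LP
`min{⟨α,x⟩ : x ≥ 0, xA ≥ 1}` and its dual `max{⟨y,1⟩ : y ≥ 0, Ay ≤ α}` both have
integral optimum solutions (expressed via a pair of integral feasible solutions
with equal objective values, which are then optimal by LP duality). -/
def HasMFMC (C : Clutter n) : Prop :=
  ∀ α : Fin n → ℕ,
    ∃ (x : Fin n → ℕ) (y : Finset (Fin n) → ℕ),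
      (∀ e ∈ C.edges, 1 ≤ ∑ i ∈ e, x i) ∧
      (∀ e, e ∉ C.edges → y e = 0) ∧
      (∀ i : Fin n, ∑ e ∈ C.edges.filter (fun e => i ∈ e), y e ≤ α i) ∧
      (∑ i, α i * x i = ∑ e ∈ C.edges, y e)

/-- The incidence matrix of `C`, with columns indexed by the edges. -/
def inc (C : Clutter n) : Matrix (Fin n) {e // e ∈ C.edges} ℤ :=
  Matrix.of fun i e => if i ∈ e.1 then 1 else 0

end Clutter

/-- `Δ_r(A) = 1`: the gcd of all nonzero `r × r` subdeterminants of `A` is `1`,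
i.e. every common divisor of them is a unit. -/
def DeltaOne {m m' : Type*} [Fintype m] [Fintype m'] (A : Matrix m m' ℤ) (r : ℕ) : Prop :=
  ∀ k : ℤ, (∀ (f : Fin r → m) (g : Fin r → m'), Function.Injective f → Function.Injective g →
    (A.submatrix f g).det ≠ 0 → k ∣ (A.submatrix f g).det) → IsUnit k

/-!
Let `M` be a perfect matching. Summing the edge constraints over `M` shows `∑ x ≥ |M|` on `Q(A)`,
and the uniform point `x₀ = (1/d, …, 1/d)` attains this bound, so `F = Q(A) ∩ {∑ x ≤ |M|}` is a
nonempty compact face of `Q(A)`. A vertex of `F` maximizing the coordinate `x_i` is a vertex of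
`Q(A)`, hence integral; its support is a vertex cover of size at most `|M| ≤ α₀(C)` which contains
`i` because `x_i ≥ 1/d > 0`. Removing `i` from this minimum cover gives a cover of `C \ {x_i}`.
-/

theorem Finset.card_filter_ne_zero_le_sum {ι : Type*} [Fintype ι] (t : ι → ℕ) :
    #{j | t j ≠ 0} ≤ ∑ j, t j := by
  rw [← sum_filter_ne_zero]
  simpa using card_nsmul_le_sum _ t 1 fun j hj => Nat.one_le_iff_ne_zero.mpr (mem_filter.mp hj).2

section Convex

variable {E : Type*} [AddCommGroup E] [Module ℝ E] [TopologicalSpace E]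

theorem isExposed_sep_le {A : Set E} {l : StrongDual ℝ E} {b : ℝ} (hl : ∀ y ∈ A, b ≤ l y) :
    IsExposed ℝ A {x ∈ A | l x ≤ b} := by
  rintro ⟨x₀, hx₀A, hx₀b⟩
  refine ⟨-l, Set.ext fun x => ⟨fun ⟨hxA, hxb⟩ => ⟨hxA, fun y hy => ?_⟩,
    fun ⟨hxA, hx⟩ => ⟨hxA, ?_⟩⟩⟩
  · simpa using hxb.trans (hl y hy)
  · simpa using (neg_le_neg_iff.mp (by simpa using hx x₀ hx₀A)).trans hx₀b

variable [T2Space E] [IsTopologicalAddGroup E] [ContinuousSMul ℝ E] [LocallyConvexSpace ℝ E]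

theorem IsCompact.exists_extremePoint_isMaxOn {s : Set E} (hs : IsCompact s) (hne : s.Nonempty)
    (l : StrongDual ℝ E) : ∃ x ∈ s.extremePoints ℝ, IsMaxOn l s x := by
  obtain ⟨x, hx, hmax⟩ := hs.exists_isMaxOn hne l.continuous.continuousOn
  have hF : IsExposed ℝ s (l.toExposed s) := ContinuousLinearMap.toExposed.isExposed
  obtain ⟨y, hy⟩ := (hF.isCompact hs).extremePoints_nonempty ⟨x, hx, hmax⟩
  exact ⟨y, hF.isExtreme.extremePoints_subset_extremePoints hy, hy.1.2⟩

end Convex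

namespace Clutter

variable {n : ℕ} {C : Clutter n}

variable (C) in
structure IsPerfectMatching (M : Finset (Finset (Fin n))) : Prop where
  subset_edges : M ⊆ C.edges
  pairwiseDisjoint : (M : Set (Finset (Fin n))).PairwiseDisjoint id
  exists_mem : ∀ i, ∃ e ∈ M, i ∈ e

section QA

variable (C)

theorem isClosed_QA : IsClosed C.QA := by
  simp only [QA, Set.ofPred_and, Set.ofPred_forall]
  exact (isClosed_iInter fun j => isClosed_le continuous_const (continuous_apply j)).inter
    (isClosed_iInter fun e => isClosed_iInter fun _ =>
      isClosed_le continuous_const (continuous_finsetSum _ fun j _ => continuous_apply j))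

theorem isCompact_sep_sum_le (b : ℝ) : IsCompact {x ∈ C.QA | ∑ j, x j ≤ b} := by
  refine (isCompact_Icc (a := 0) (b := fun _ => b)).of_isClosed_subset
    (C.isClosed_QA.inter (isClosed_le (continuous_finsetSum _ fun j _ => continuous_apply j)
      continuous_const)) fun x ⟨hxQ, hxb⟩ => ⟨hxQ.1, fun j => ?_⟩
  exact (single_le_sum (fun k _ => hxQ.1 k) (mem_univ j)).trans hxb

theorem exists_natCast_eq_of_mem_extremePoints (hQ : C.QAIntegral) {x : Fin n → ℝ}
    (hx : x ∈ C.QA.extremePoints ℝ) : ∃ t : Fin n → ℕ, x = fun j => (t j : ℝ) := by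
  choose z hz using hQ x hx
  refine ⟨fun j => (z j).toNat, funext fun j => ?_⟩
  have hzj : 0 ≤ z j := by exact_mod_cast hz j ▸ hx.1.1 j
  rw [hz j]
  exact_mod_cast (Int.toNat_of_nonneg hzj).symm

end QA

theorem Uniform.sum_inv_eq_one {d : ℕ} (hC : C.Uniform d) (hd : d ≠ 0) :
    ∀ e ∈ C.edges, ∑ _j ∈ e, (d : ℝ)⁻¹ = 1 := fun e he => by
  simp [hC e he, hd]

theorem Uniform.const_inv_mem_QA {d : ℕ} (hC : C.Uniform d) (hd : d ≠ 0) :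
    (fun _ => (d : ℝ)⁻¹) ∈ C.QA :=
  ⟨fun _ => by positivity, fun e he => (hC.sum_inv_eq_one hd e he).ge⟩

section Cover

theorem isCover_univ : C.IsCover univ := fun e he => by
  simpa using C.nonempty_edges e he

theorem coverNumber_le {S : Finset (Fin n)} (hS : C.IsCover S) : C.coverNumber ≤ S.card :=
  Nat.sInf_le ⟨S, hS, rfl⟩

theorem exists_isCover_card_eq_coverNumber : ∃ S, C.IsCover S ∧ S.card = C.coverNumber :=
  Nat.sInf_mem (s := {k | ∃ S : Finset (Fin n), C.IsCover S ∧ S.card = k})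
    ⟨_, univ, isCover_univ, rfl⟩

theorem IsCover.erase_delete {S : Finset (Fin n)} (hS : C.IsCover S) (i : Fin n) :
    (C.delete i).IsCover (S.erase i) := by
  intro e he
  obtain ⟨he, hie⟩ := mem_filter.mp he
  obtain ⟨j, hj⟩ := hS e he
  obtain ⟨hje, hjS⟩ := mem_inter.mp hj
  exact ⟨j, mem_inter.mpr ⟨hje, mem_erase.mpr ⟨fun hji => hie (hji ▸ hje), hjS⟩⟩⟩

theorem coverNumber_delete_lt {S : Finset (Fin n)} (hS : C.IsCover S)
    (hmin : S.card ≤ C.coverNumber) {i : Fin n} (hi : i ∈ S) :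
    (C.delete i).coverNumber < C.coverNumber :=
  calc (C.delete i).coverNumber ≤ (S.erase i).card := coverNumber_le (hS.erase_delete i)
    _ < S.card := card_erase_lt_of_mem hi
    _ ≤ C.coverNumber := hmin

theorem IsCover.indicator_mem_QA {S : Finset (Fin n)} (hS : C.IsCover S) :
    (fun j => if j ∈ S then (1 : ℝ) else 0) ∈ C.QA := by
  refine ⟨fun j => by positivity, fun e he => ?_⟩
  rw [sum_boole, filter_mem_eq_inter, Nat.one_le_cast]
  exact card_pos.mpr (hS e he)

theorem isCover_support_of_natCast_mem_QA {t : Fin n → ℕ} (ht : (fun j => (t j : ℝ)) ∈ C.QA) :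
    C.IsCover {j | t j ≠ 0} := by
  intro e he
  have hsum : ∑ j ∈ e, t j ≠ 0 := by
    have h : (1 : ℝ) ≤ ∑ j ∈ e, (t j : ℝ) := ht.2 e he
    exact_mod_cast (zero_lt_one.trans_le h).ne'
  obtain ⟨j, hje, hj⟩ := exists_ne_zero_of_sum_ne_zero hsum
  exact ⟨j, mem_inter.mpr ⟨hje, mem_filter.mpr ⟨mem_univ j, hj⟩⟩⟩

end Cover

namespace IsPerfectMatching

variable {M : Finset (Finset (Fin n))} (hM : C.IsPerfectMatching M)
include hM

theorem ne_zero_of_uniform {d : ℕ} (hC : C.Uniform d) (i : Fin n) : d ≠ 0 := by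
  obtain ⟨e, he, hie⟩ := hM.exists_mem i
  exact hC e (hM.subset_edges he) ▸ card_ne_zero_of_mem hie

theorem sum_eq_sum_sum {β : Type*} [AddCommMonoid β] (x : Fin n → β) :
    ∑ j, x j = ∑ e ∈ M, ∑ j ∈ e, x j := by
  have hU : M.biUnion id = univ := eq_univ_of_forall fun i => mem_biUnion.mpr (hM.exists_mem i)
  rw [← hU, sum_biUnion hM.pairwiseDisjoint]
  rfl

theorem sum_eq_card {x : Fin n → ℝ} (hx : ∀ e ∈ C.edges, ∑ j ∈ e, x j = 1) :
    ∑ j, x j = M.card := by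
  rw [hM.sum_eq_sum_sum, card_eq_sum_ones, Nat.cast_sum, Nat.cast_one]
  exact sum_congr rfl fun e he => hx e (hM.subset_edges he)

theorem card_le_sum_of_mem_QA {x : Fin n → ℝ} (hx : x ∈ C.QA) : (M.card : ℝ) ≤ ∑ j, x j := by
  rw [hM.sum_eq_sum_sum, card_eq_sum_ones, Nat.cast_sum, Nat.cast_one]
  exact sum_le_sum fun e he => hx.2 e (hM.subset_edges he)

theorem card_le_coverNumber : M.card ≤ C.coverNumber := by
  obtain ⟨S, hS, hcard⟩ := exists_isCover_card_eq_coverNumber (C := C)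
  have := hM.card_le_sum_of_mem_QA hS.indicator_mem_QA
  rw [sum_boole, filter_mem_eq_inter, univ_inter] at this
  exact hcard ▸ (by exact_mod_cast this)

theorem isExposed_sep_sum_le : IsExposed ℝ C.QA {x ∈ C.QA | ∑ j, x j ≤ M.card} := by
  have hl (x : Fin n → ℝ) :
      (∑ j, ContinuousLinearMap.proj j : StrongDual ℝ (Fin n → ℝ)) x = ∑ j, x j := by simp
  simp_rw [← hl]
  exact isExposed_sep_le fun y hy => (hl y).symm ▸ hM.card_le_sum_of_mem_QA hy

end IsPerfectMatching

end Clutter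

open Clutter in
/-- If `C` is a `d`-uniform clutter with a perfect matching whose set
covering polyhedron `Q(A)` is integral, then `C` is vertex critical:
`α₀(C \ {x_i}) < α₀(C)` for every vertex `x_i`. -/
theorem stmt3 {n d : ℕ} (C : Clutter n) (hC : C.Uniform d)
    (hpm : C.HasPerfectMatching) (hQ : C.QAIntegral) :
    ∀ i : Fin n, (C.delete i).coverNumber < C.coverNumber := by
  intro i
  obtain ⟨M, hMsub, hMdisj, hMcov⟩ := hpm
  have hM : C.IsPerfectMatching M := ⟨hMsub, hMdisj, hMcov⟩
  have hd : d ≠ 0 := hM.ne_zero_of_uniform hC i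
  set x₀ : Fin n → ℝ := fun _ => (d : ℝ)⁻¹
  have hx₀ : x₀ ∈ {x ∈ C.QA | ∑ j, x j ≤ M.card} :=
    ⟨hC.const_inv_mem_QA hd, (hM.sum_eq_card (hC.sum_inv_eq_one hd)).le⟩
  obtain ⟨x, hxF, hxmax⟩ := (C.isCompact_sep_sum_le M.card).exists_extremePoint_isMaxOn
    ⟨x₀, hx₀⟩ (ContinuousLinearMap.proj i)
  obtain ⟨t, rfl⟩ := C.exists_natCast_eq_of_mem_extremePoints hQ
    (hM.isExposed_sep_sum_le.isExtreme.extremePoints_subset_extremePoints hxF)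
  have hti : t i ≠ 0 := by
    have : (d : ℝ)⁻¹ ≤ t i := hxmax hx₀
    exact_mod_cast ((inv_pos.mpr (by positivity)).trans_le this).ne'
  refine coverNumber_delete_lt (isCover_support_of_natCast_mem_QA hxF.1.1) ?_
    (mem_filter.mpr ⟨mem_univ i, hti⟩)
  calc #{j | t j ≠ 0} ≤ ∑ j, t j := card_filter_ne_zero_le_sum t
    _ ≤ M.card := by
        have hsum : ∑ j, (t j : ℝ) ≤ M.card := hxF.1.2
        exact_mod_cast hsum
    _ ≤ C.coverNumber := hM.card_le_coverNumber
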